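/- arXiv:1710.00773 — 4 statements merged into one kernel-verified Lean document; each statement's English description precedes it below -/
import Mathlib

section
/- Let x, x' ∈ ℂ^{d₁}, y, y' ∈ ℂ^{d₂}, z, z' ∈ ℂ^{d₃} and suppose the rank-one third-order tensor x ∘ y ∘ z is nonzero (i.e. x(i)·y(j)·z(k) ≠ 0 for some i,j,k) and x(i)·y(j)·z(k) = x'(i)·y'(j)·z'(k) for all i,j,k. Then there exist nonzero complex scalars λ, μ, ν with λ·μ·ν = 1 such that x' = λ·x, y' = μ·y, and z' = ν·z. -/
/-- Harshman's uniqueness of the rank-one (R = 1) CP decomposition: if the rank-one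
third-order tensor `x ∘ y ∘ z` is nonzero and equals `x' ∘ y' ∘ z'`, then the factors
agree up to scalars multiplying to one. -/
theorem rank_one_cp_uniqueness {d₁ d₂ d₃ : ℕ}
    (x x' : Fin d₁ → ℂ) (y y' : Fin d₂ → ℂ) (z z' : Fin d₃ → ℂ)
    (hne : ∃ (i : Fin d₁) (j : Fin d₂) (k : Fin d₃), x i * y j * z k ≠ 0)
    (heq : ∀ (i : Fin d₁) (j : Fin d₂) (k : Fin d₃),
      x i * y j * z k = x' i * y' j * z' k) :
    ∃ lam mu nu : ℂ, lam ≠ 0 ∧ mu ≠ 0 ∧ nu ≠ 0 ∧ lam * mu * nu = 1 ∧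
      x' = lam • x ∧ y' = mu • y ∧ z' = nu • z := by
  obtain ⟨i₀, j₀, k₀, hP⟩ := hne
  have ha : x i₀ ≠ 0 := fun h => hP (by simp [h])
  have hb : y j₀ ≠ 0 := fun h => hP (by simp [h])
  have hc : z k₀ ≠ 0 := fun h => hP (by simp [h])
  have hP' : x' i₀ * y' j₀ * z' k₀ ≠ 0 := (heq i₀ j₀ k₀) ▸ hP
  have ha' : x' i₀ ≠ 0 := fun h => hP' (by simp [h])
  have hb' : y' j₀ ≠ 0 := fun h => hP' (by simp [h])
  have hc' : z' k₀ ≠ 0 := fun h => hP' (by simp [h])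
  refine ⟨x' i₀ / x i₀, y' j₀ / y j₀, z' k₀ / z k₀,
    div_ne_zero ha' ha, div_ne_zero hb' hb, div_ne_zero hc' hc, ?_, ?_, ?_, ?_⟩
  · field_simp
    linear_combination -(heq i₀ j₀ k₀)
  · funext i
    have h := heq i j₀ k₀
    simp only [Pi.smul_apply, smul_eq_mul]
    field_simp
    have h0 := heq i₀ j₀ k₀
    have hyz : y' j₀ * z' k₀ ≠ 0 := mul_ne_zero hb' hc'
    have : x' i * (y' j₀ * z' k₀) * x i₀ = x' i₀ * x i * (y' j₀ * z' k₀) := by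
      rw [← mul_assoc (x' i), ← h]
      linear_combination x i * h0
    exact mul_right_cancel₀ hyz (by linear_combination this)
  · funext j
    have h := heq i₀ j k₀
    simp only [Pi.smul_apply, smul_eq_mul]
    field_simp
    have h0 := heq i₀ j₀ k₀
    have hxz : x' i₀ * z' k₀ ≠ 0 := mul_ne_zero ha' hc'
    have : y' j * (x' i₀ * z' k₀) * y j₀ = y' j₀ * y j * (x' i₀ * z' k₀) := by
      have hh : x i₀ * y j * z k₀ = x' i₀ * y' j * z' k₀ := h
      linear_combination y j * h0 - y j₀ * hh
    exact mul_right_cancel₀ hxz (by linear_combination this)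
  · funext k
    have h := heq i₀ j₀ k
    simp only [Pi.smul_apply, smul_eq_mul]
    field_simp
    have h0 := heq i₀ j₀ k₀
    have hxy : x' i₀ * y' j₀ ≠ 0 := mul_ne_zero ha' hb'
    have : z' k * (x' i₀ * y' j₀) * z k₀ = z' k₀ * z k * (x' i₀ * y' j₀) := by
      linear_combination z k * h0 - z k₀ * h
    exact mul_right_cancel₀ hxy (by linear_combination this)
end

section
/- Let ω, τ, φ ∈ ℝ and Δ₁, Δ₂, … ∈ ℝ, and define η_n = ((n−1)·τ·ω + Δ_n·ω + φ) mod 2π, β⁽¹⁾_n = (η_{n+1} − η_n) mod 2π, and β⁽²⁾_n = (β⁽¹⁾_{n+1} − β⁽¹⁾_n) mod 2π. Fix an index n₀ and suppose Δ_{n₀+2} − 2·Δ_{n₀+1} + Δ_{n₀} > 0 and 0 < (Δ_{n₀+2} − 2·Δ_{n₀+1} + Δ_{n₀})·ω < 2π. Then ω = β⁽²⁾_{n₀} / (Δ_{n₀+2} − 2·Δ_{n₀+1} + Δ_{n₀}). -/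
/-- `mod2pi x` is the remainder of the Euclidean division of `x` by `2π`, lying in `[0, 2π)`. -/
noncomputable def mod2pi (x : ℝ) : ℝ := toIcoMod Real.two_pi_pos 0 x

lemma mod2pi_exists (x : ℝ) : ∃ k : ℤ, mod2pi x = x - k • (2 * Real.pi) := by
  exact ⟨toIcoDiv Real.two_pi_pos 0 x, rfl⟩

lemma mod2pi_add_zsmul (x : ℝ) (k : ℤ) : mod2pi (x + k • (2 * Real.pi)) = mod2pi x :=
  toIcoMod_add_zsmul _ _ _ _

/-- Exact recovery of the carrier frequency from the second-stage differences of the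
(mod-2π) phases of a steering-matrix column, under the time-delay condition
`0 < (Δ_{n₀+2} − 2Δ_{n₀+1} + Δ_{n₀})·ω < 2π` (Assumption A4). -/
theorem carrier_frequency_recovery (omg τ φ : ℝ) (Δ : ℕ → ℝ)
    (η β₁ β₂ : ℕ → ℝ)
    (hη : ∀ n, 1 ≤ n → η n = mod2pi (((n : ℝ) - 1) * τ * omg + Δ n * omg + φ))
    (hβ₁ : ∀ n, 1 ≤ n → β₁ n = mod2pi (η (n + 1) - η n))
    (hβ₂ : ∀ n, 1 ≤ n → β₂ n = mod2pi (β₁ (n + 1) - β₁ n))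
    (n₀ : ℕ) (hn₀ : 1 ≤ n₀)
    (hΔpos : 0 < Δ (n₀ + 2) - 2 * Δ (n₀ + 1) + Δ n₀)
    (hlt : 0 < (Δ (n₀ + 2) - 2 * Δ (n₀ + 1) + Δ n₀) * omg)
    (hub : (Δ (n₀ + 2) - 2 * Δ (n₀ + 1) + Δ n₀) * omg < 2 * Real.pi) :
    omg = β₂ n₀ / (Δ (n₀ + 2) - 2 * Δ (n₀ + 1) + Δ n₀) := by
  set θ : ℕ → ℝ := fun n => ((n : ℝ) - 1) * τ * omg + Δ n * omg + φ with hθ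
  obtain ⟨k0, hk0⟩ := mod2pi_exists (θ n₀)
  obtain ⟨k1, hk1⟩ := mod2pi_exists (θ (n₀ + 1))
  obtain ⟨k2, hk2⟩ := mod2pi_exists (θ (n₀ + 2))
  obtain ⟨m1, hm1⟩ := mod2pi_exists (η (n₀ + 1) - η n₀)
  obtain ⟨m2, hm2⟩ := mod2pi_exists (η (n₀ + 2) - η (n₀ + 1))
  have hηn0 := hη n₀ hn₀
  have hηn1 := hη (n₀ + 1) (by omega)
  have hηn2 := hη (n₀ + 2) (by omega)
  have hb1n0 := hβ₁ n₀ hn₀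
  have hb1n1 := hβ₁ (n₀ + 1) (by omega)
  have hb2 := hβ₂ n₀ hn₀
  have key : β₂ n₀ = (Δ (n₀ + 2) - 2 * Δ (n₀ + 1) + Δ n₀) * omg := by
    have harg : β₁ (n₀ + 1) - β₁ n₀
        = (Δ (n₀ + 2) - 2 * Δ (n₀ + 1) + Δ n₀) * omg
          + (k1 - k2 + (k1 - k0) + (m1 - m2)) • (2 * Real.pi) := by
      rw [hb1n0, hb1n1, hm1, hm2, hηn0, hηn1, hηn2, hk0, hk1, hk2]
      simp only [hθ]
      simp only [zsmul_eq_mul]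
      push_cast
      ring
    rw [hb2, harg, mod2pi_add_zsmul]
    exact (toIcoMod_eq_self _).2 ⟨by linarith [hlt], by simpa using hub⟩
  rw [key]
  field_simp
end

section
/- Let ω > 0, τ ∈ ℝ with 0 ≤ τ·ω < 2π, and Δ₁, Δ₂, … ∈ ℝ, and define η_n = ((n−1)·τ·ω + Δ_n·ω + φ) mod 2π and β⁽¹⁾_n = (η_{n+1} − η_n) mod 2π for some φ ∈ ℝ. Then for every n ≥ 1: τ = ((β⁽¹⁾_n − (Δ_{n+1} − Δ_n)·ω) mod 2π) / ω. -/
lemma mod2pi_eq_mod2pi {x y : ℝ} (h : ∃ k : ℤ, y - x = k • (2 * Real.pi)) :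
    mod2pi x = mod2pi y :=
  (toIcoMod_eq_toIcoMod Real.two_pi_pos).2 h

/-- Exact recovery of the inter-sensor delay `τ` (hence the DoA) from the first-stage
differences of the (mod-2π) phases of a steering-matrix column, given the carrier
frequency `ω`, under Assumption A6 (`0 ≤ τω < 2π`). -/
theorem delay_recovery (omg τ φ : ℝ) (Δ : ℕ → ℝ)
    (homg : 0 < omg) (hτ₀ : 0 ≤ τ * omg) (hτ₁ : τ * omg < 2 * Real.pi)
    (η β₁ : ℕ → ℝ)
    (hη : ∀ n, 1 ≤ n → η n = mod2pi (((n : ℝ) - 1) * τ * omg + Δ n * omg + φ))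
    (hβ₁ : ∀ n, 1 ≤ n → β₁ n = mod2pi (η (n + 1) - η n)) :
    ∀ n, 1 ≤ n →
      τ = mod2pi (β₁ n - (Δ (n + 1) - Δ n) * omg) / omg := by
  intro n hn
  set r : ℕ → ℝ := fun m => ((m : ℝ) - 1) * τ * omg + Δ m * omg + φ with hr
  have e1 : η n = mod2pi (r n) := hη n hn
  have e2 : η (n + 1) = mod2pi (r (n + 1)) := hη (n + 1) (by omega)
  have e3 : β₁ n = mod2pi (η (n + 1) - η n) := hβ₁ n hn
  have key : mod2pi (β₁ n - (Δ (n + 1) - Δ n) * omg) = τ * omg := by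
    have hA : ∃ k : ℤ, τ * omg - (β₁ n - (Δ (n + 1) - Δ n) * omg) = k • (2 * Real.pi) := by
      have h1 : r (n + 1) - mod2pi (r (n + 1)) =
          toIcoDiv Real.two_pi_pos 0 (r (n + 1)) • (2 * Real.pi) :=
        self_sub_toIcoMod Real.two_pi_pos 0 (r (n + 1))
      have h2 : r n - mod2pi (r n) = toIcoDiv Real.two_pi_pos 0 (r n) • (2 * Real.pi) :=
        self_sub_toIcoMod Real.two_pi_pos 0 (r n)
      have h3 : (η (n + 1) - η n) - mod2pi (η (n + 1) - η n) =
          toIcoDiv Real.two_pi_pos 0 (η (n + 1) - η n) • (2 * Real.pi) :=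
        self_sub_toIcoMod Real.two_pi_pos 0 (η (n + 1) - η n)
      refine ⟨toIcoDiv Real.two_pi_pos 0 (η (n + 1) - η n)
        + toIcoDiv Real.two_pi_pos 0 (r (n + 1)) - toIcoDiv Real.two_pi_pos 0 (r n), ?_⟩
      have hraw : r (n + 1) - r n = τ * omg + (Δ (n + 1) - Δ n) * omg := by
        simp [hr]; push_cast; ring
      rw [e3, e1, e2] at *
      push_cast [add_smul, sub_smul]
      linarith [h1, h2, h3]
    have := mod2pi_eq_mod2pi hA
    rw [this]
    exact (toIcoMod_eq_self Real.two_pi_pos).2 ⟨hτ₀, by simpa using hτ₁⟩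
  rw [key]
  field_simp
end

section
/- Let L ≥ 1, T_s > 0, ω₁, ω₂ ∈ ℝ, and r : ℤ → ℂ. Define vectors u, v ∈ ℂ^{2L+1} by u(l) = r(l)·exp(i·ω₁·l·T_s) and v(l) = r(l)·exp(i·ω₂·l·T_s) for l = −L,…,L. Suppose there exist indices l₁ ≠ l₂ in {−L,…,L} with r(l₁) ≠ 0, r(l₂) ≠ 0, and (ω₁ − ω₂)·(l₁ − l₂)·T_s not an integer multiple of 2π. Then u and v are linearly independent over ℂ. -/
/-- Two truncated autocorrelation sequences `u(l) = r(l)e^{iω₁ l T_s}` and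
`v(l) = r(l)e^{iω₂ l T_s}`, `l = −L,…,L`, of modulated signals with a common baseband
autocorrelation `r` are linearly independent over `ℂ` provided `r` is nonzero at two
indices `l₁ ≠ l₂` with `(ω₁ − ω₂)(l₁ − l₂)T_s` not an integer multiple of `2π`. -/
theorem modulated_autocorrelations_linearIndependent
    (L : ℕ) (hL : 1 ≤ L) (T_s : ℝ) (hT : 0 < T_s) (ω₁ ω₂ : ℝ) (r : ℤ → ℂ)
    (u v : Set.Icc (-(L : ℤ)) (L : ℤ) → ℂ)
    (hu : ∀ l : Set.Icc (-(L : ℤ)) (L : ℤ),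
      u l = r l * Complex.exp (Complex.I * (ω₁ : ℂ) * ((l : ℤ) : ℂ) * (T_s : ℂ)))
    (hv : ∀ l : Set.Icc (-(L : ℤ)) (L : ℤ),
      v l = r l * Complex.exp (Complex.I * (ω₂ : ℂ) * ((l : ℤ) : ℂ) * (T_s : ℂ)))
    (l₁ l₂ : Set.Icc (-(L : ℤ)) (L : ℤ)) (hne : (l₁ : ℤ) ≠ (l₂ : ℤ))
    (hr₁ : r l₁ ≠ 0) (hr₂ : r l₂ ≠ 0)
    (hfreq : ¬ ∃ m : ℤ, (ω₁ - ω₂) * (((l₁ : ℤ) : ℝ) - ((l₂ : ℤ) : ℝ)) * T_s =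
      m * (2 * Real.pi)) :
    LinearIndependent ℂ ![u, v] := by
  rw [LinearIndependent.pair_iff]
  intro a b hab
  set E1 := Complex.exp (Complex.I * (ω₁ : ℂ) * ((l₁ : ℤ) : ℂ) * (T_s : ℂ)) with hE1
  set E2 := Complex.exp (Complex.I * (ω₁ : ℂ) * ((l₂ : ℤ) : ℂ) * (T_s : ℂ)) with hE2
  set F1 := Complex.exp (Complex.I * (ω₂ : ℂ) * ((l₁ : ℤ) : ℂ) * (T_s : ℂ)) with hF1
  set F2 := Complex.exp (Complex.I * (ω₂ : ℂ) * ((l₂ : ℤ) : ℂ) * (T_s : ℂ)) with hF2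
  have hab1 := congrFun hab l₁
  have hab2 := congrFun hab l₂
  simp only [Pi.add_apply, Pi.smul_apply, smul_eq_mul, Pi.zero_apply, hu, hv] at hab1 hab2
  rw [← hE1, ← hF1] at hab1
  rw [← hE2, ← hF2] at hab2
  -- divide out r l₁, r l₂
  have h1 : a * E1 + b * F1 = 0 := by
    have : r ↑l₁ * (a * E1 + b * F1) = 0 := by ring_nf; ring_nf at hab1; linear_combination hab1
    rcases mul_eq_zero.1 this with h | h
    · exact absurd h hr₁
    · exact h
  have h2 : a * E2 + b * F2 = 0 := by
    have : r ↑l₂ * (a * E2 + b * F2) = 0 := by ring_nf; ring_nf at hab2; linear_combination hab2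
    rcases mul_eq_zero.1 this with h | h
    · exact absurd h hr₂
    · exact h
  have key : E1 * F2 ≠ E2 * F1 := by
    intro h
    rw [hE1, hE2, hF1, hF2, ← Complex.exp_add, ← Complex.exp_add,
      Complex.exp_eq_exp_iff_exists_int] at h
    obtain ⟨n, hn⟩ := h
    apply hfreq
    refine ⟨n, ?_⟩
    have hI : Complex.I * ((((ω₁ - ω₂) * (((l₁ : ℤ) : ℝ) - ((l₂ : ℤ) : ℝ)) * T_s : ℝ)) : ℂ)
        = Complex.I * (((n : ℝ) * (2 * Real.pi) : ℝ) : ℂ) := by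
      push_cast
      push_cast at hn
      ring_nf
      ring_nf at hn
      linear_combination hn
    have := mul_left_cancel₀ Complex.I_ne_zero hI
    exact_mod_cast this
  have hb : b = 0 := by
    -- a * E1 = -b * F1, a * E2 = -b * F2
    by_contra hb
    have ha1 : a * E1 = -b * F1 := by linear_combination h1
    have ha2 : a * E2 = -b * F2 := by linear_combination h2
    -- multiply: a*E1*F2 = -b*F1*F2 and a*E2*F1 = -b*F2*F1
    have : a * (E1 * F2 - E2 * F1) = 0 := by
      linear_combination F2 * ha1 - F1 * ha2
    rcases mul_eq_zero.1 this with h | h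
    · -- a = 0, then from h1, b * F1 = 0 with F1 ≠ 0, so b = 0
      apply hb
      rw [h, zero_mul, zero_add] at h1
      rcases mul_eq_zero.1 h1 with h' | h'
      · exact h'
      · exact absurd h' (Complex.exp_ne_zero _)
    · exact key (by linear_combination h)
  refine ⟨?_, hb⟩
  rw [hb, zero_mul, add_zero] at h1
  rcases mul_eq_zero.1 h1 with h' | h'
  · exact h'
  · exact absurd h' (Complex.exp_ne_zero _)
end
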